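/- Let G be a finite group, p a prime, and N a normal subgroup of G. Suppose M is a normal subgroup of G which is minimal among normal subgroups K of G satisfying K/(K ∩ N) ≰ Z_{U_p}(G/(K ∩ N)). Then M has a unique maximal G-invariant subgroup L; moreover L ≥ M ∩ N, L/(M ∩ N) ≤ Z_{U_p}(G/(M ∩ N)), and M/L ≰ Z_{U_p}(G/L). -/

import Mathlib

section PartialPiDefs

variable {G : Type*} [Group G]

/-- A chief series of a group `G`: a strictly increasing series of normal subgroups of `G`
running from `⊥` to `⊤` such that there is no normal subgroup of `G` strictly between two
consecutive terms. -/
structure IsChiefSeries {n : ℕ} (σ : Fin (n + 1) → Subgroup G) : Prop where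
  bot : σ 0 = ⊥
  top : σ (Fin.last n) = ⊤
  mono : StrictMono σ
  normal : ∀ i, (σ i).Normal
  chief : ∀ (i : Fin n) (N : Subgroup G), N.Normal →
    σ i.castSucc ≤ N → N ≤ σ i.succ → N = σ i.castSucc ∨ N = σ i.succ

/-- `L/K` is a chief factor of `G`: both are normal in `G`, `K < L`, and there is no
normal subgroup of `G` strictly between `K` and `L`. -/
structure IsChiefFactor (K L : Subgroup G) : Prop where
  normK : K.Normal
  normL : L.Normal
  lt : K < L
  chief : ∀ N : Subgroup G, N.Normal → K ≤ N → N ≤ L → N = K ∨ N = L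

/-- `H` satisfies the partial Π-property in `G`: there is a chief series
`1 = G_0 < G_1 < ⋯ < G_n = G` such that for each `i`, the index
`|G/G_{i-1} : N_{G/G_{i-1}}(H G_{i-1}/G_{i-1} ∩ G_i/G_{i-1})|` is a
`π(H G_{i-1}/G_{i-1} ∩ G_i/G_{i-1})`-number, i.e. every prime dividing this index divides
the order of `H G_{i-1}/G_{i-1} ∩ G_i/G_{i-1}`. -/
def SatisfiesPartialPi (H : Subgroup G) : Prop :=
  ∃ (n : ℕ) (σ : Fin (n + 1) → Subgroup G) (hσ : IsChiefSeries σ),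
    ∀ i : Fin n,
      haveI : (σ i.castSucc).Normal := hσ.normal _
      ∀ q : ℕ, q.Prime →
        q ∣ (Subgroup.normalizer (((H.map (QuotientGroup.mk' (σ i.castSucc)) ⊓
              (σ i.succ).map (QuotientGroup.mk' (σ i.castSucc)) : Subgroup (G ⧸ σ i.castSucc)) :
                Set (G ⧸ σ i.castSucc)))).index →
        q ∣ Nat.card ↥(H.map (QuotientGroup.mk' (σ i.castSucc)) ⊓
              (σ i.succ).map (QuotientGroup.mk' (σ i.castSucc)))

/-- A (finite) group `G` is `p`-soluble if every chief factor of `G` is either a `p`-group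
or a `p'`-group. -/
def IsPSoluble (p : ℕ) (G : Type*) [Group G] : Prop :=
  ∀ K L : Subgroup G, IsChiefFactor K L →
    (∃ k : ℕ, K.relIndex L = p ^ k) ∨ ¬ p ∣ K.relIndex L

/-- A (finite) group `G` is `p`-supersoluble if every chief factor of `G` is either a
`p'`-group or cyclic of order `p`. -/
def IsPSupersoluble (p : ℕ) (G : Type*) [Group G] : Prop :=
  ∀ K L : Subgroup G, IsChiefFactor K L →
    (¬ p ∣ K.relIndex L) ∨ K.relIndex L = p

/-- A (finite, `p`-soluble) group has `p`-length at most `1` iff it has a normal series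
`1 ≤ A ≤ B ≤ G` where `A` and `G/B` are `p'`-groups and `B/A` is a `p`-group; equivalently,
the upper `p`-series `1 ≤ O_{p'}(G) ≤ O_{p'p}(G) ≤ O_{p'pp'}(G) = G` has at most one
nontrivial `p`-factor. -/
def HasPLengthLEOne (p : ℕ) (G : Type*) [Group G] : Prop :=
  ∃ A B : Subgroup G, A.Normal ∧ B.Normal ∧ A ≤ B ∧
    (¬ p ∣ Nat.card A) ∧ (∃ k : ℕ, A.relIndex B = p ^ k) ∧ (¬ p ∣ B.index)

/-- A `2`-group is quaternion-free if it has no section (quotient of a subgroup) isomorphic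
to the quaternion group `Q₈` of order `8`. -/
def QuaternionFree (P : Type*) [Group P] : Prop :=
  ∀ (H : Subgroup P) (N : Subgroup H) (hN : N.Normal),
    haveI := hN
    IsEmpty ((H ⧸ N) ≃* QuaternionGroup 2)

end PartialPiDefs

section Hypercenters

variable {G : Type*} [Group G]

/-- The chief factor `L/K` of `G` is `U_p`-central in `G` if the semidirect product
`(L/K) ⋊ (G/C_G(L/K))` (with the conjugation action) is `p`-supersoluble.  Here `L/K` is
realized as the image of `L` in `G/K`, and `G/C_G(L/K)` as the quotient of `G/K` by the
kernel of the conjugation action on `L/K`. -/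
def UpCentralFactor (p : ℕ) (K L : Subgroup G) (hK : K.Normal) (hL : L.Normal) : Prop :=
  haveI := hK
  letI A : Subgroup (G ⧸ K) := L.map (QuotientGroup.mk' K)
  haveI hA : A.Normal := hL.map _ (QuotientGroup.mk'_surjective K)
  letI φ : G ⧸ K →* MulAut ↥A := MulAut.conjNormal
  IsPSupersoluble p (↥A ⋊[QuotientGroup.kerLift φ] ((G ⧸ K) ⧸ φ.ker))

/-- `Z_{U_p}(G)`, the `U_p`-hypercenter of `G`: the largest normal subgroup of `G` all of
whose `G`-chief factors below it are `U_p`-central in `G`. -/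
def UpHypercenter (p : ℕ) (G : Type*) [Group G] : Subgroup G :=
  sSup {N : Subgroup G | N.Normal ∧ ∀ K L : Subgroup G, ∀ h : IsChiefFactor K L, L ≤ N →
    UpCentralFactor p K L h.normK h.normL}

/-- `Z_U(G)`, the supersoluble hypercenter of `G`: the largest normal subgroup of `G` all of
whose `G`-chief factors below it are cyclic. -/
def UHypercenter (G : Type*) [Group G] : Subgroup G :=
  sSup {N : Subgroup G | N.Normal ∧ ∀ K L : Subgroup G, ∀ h : IsChiefFactor K L, L ≤ N →
    haveI := h.normK.subgroupOf L
    IsCyclic (↥L ⧸ K.subgroupOf L)}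

end Hypercenters

section CoresSocle

variable {G : Type*} [Group G]

lemma sSup_normal {S : Set (Subgroup G)} (h : ∀ H ∈ S, H.Normal) : (sSup S).Normal := by
  constructor
  intro x hx g
  have hle : sSup S ≤ Subgroup.comap ((MulAut.conj g).toMonoidHom) (sSup S) := by
    refine sSup_le fun H hH y hy => ?_
    refine Subgroup.mem_comap.mpr ?_
    have hc : g * y * g⁻¹ ∈ H := (h H hH).conj_mem y hy g
    simpa using (le_sSup hH : H ≤ sSup S) hc
  simpa using hle hx

lemma normal_inf' {H K : Subgroup G} (h1 : H.Normal) (h2 : K.Normal) : (H ⊓ K).Normal :=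
  ⟨fun n hn g => ⟨h1.conj_mem n hn.1 g, h2.conj_mem n hn.2 g⟩⟩

/-- `O_p(G)`: the largest normal `p`-subgroup of `G`. -/
def pCore (p : ℕ) (G : Type*) [Group G] : Subgroup G :=
  sSup {H : Subgroup G | H.Normal ∧ IsPGroup p H}

/-- `N` is a minimal normal subgroup of `G`. -/
def IsMinimalNormal (N : Subgroup G) : Prop :=
  N.Normal ∧ N ≠ ⊥ ∧ ∀ K : Subgroup G, K.Normal → K ≤ N → K = ⊥ ∨ K = N

/-- `Soc(G)`: the socle of `G`, the subgroup generated by all minimal normal subgroups. -/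
def socle (G : Type*) [Group G] : Subgroup G :=
  sSup {N : Subgroup G | IsMinimalNormal N}

lemma socle_normal (G : Type*) [Group G] : (socle G).Normal :=
  sSup_normal fun _ hH => hH.1

end CoresSocle

section Omega

/-- `Ω_i(P)`: the subgroup generated by all elements `x` of `P` with `x ^ (p ^ i) = 1`. -/
def omega (p i : ℕ) (P : Type*) [Group P] : Subgroup P :=
  Subgroup.closure {x : P | x ^ p ^ i = 1}

/-- `Ω(P)` is `Ω_1(P)` if `P` has odd order or is a quaternion-free `2`-group, and `Ω_2(P)`
otherwise. -/
noncomputable def bigOmega (p : ℕ) (P : Type*) [Group P] : Subgroup P :=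
  letI := Classical.propDecidable (Odd (Nat.card P) ∨ QuaternionFree P)
  if Odd (Nat.card P) ∨ QuaternionFree P then omega p 1 P else omega p 2 P

/-- A Thompson critical subgroup of a `p`-group `P`: a characteristic subgroup `D` with
`Φ(D) ≤ Z(D)`, `[P, D] ≤ Z(D)` and `C_P(D) = Z(D)`  (here `Z(D) = D ⊓ C_P(D)`). -/
def IsThompsonCritical {P : Type*} [Group P] (D : Subgroup P) : Prop :=
  D.Characteristic ∧
  (frattini D).map D.subtype ≤ D ⊓ Subgroup.centralizer (D : Set P) ∧
  ⁅(⊤ : Subgroup P), D⁆ ≤ D ⊓ Subgroup.centralizer (D : Set P) ∧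
  Subgroup.centralizer (D : Set P) ≤ D

end Omega


section AuxProof

open Subgroup QuotientGroup Function

variable {G : Type*} [Group G]

lemma mem_sup_of_normal {B H : Subgroup G} (hB : B.Normal) {x : G} :
    x ∈ B ⊔ H ↔ ∃ b ∈ B, ∃ h ∈ H, x = b * h := by
  haveI := hB
  constructor
  · intro hx
    have hx' : x ∈ (↑(B ⊔ H) : Set G) := hx
    rw [Subgroup.normal_mul] at hx'
    obtain ⟨b, hb, h, hh, hbh⟩ := hx'
    exact ⟨b, hb, h, hh, hbh.symm⟩
  · rintro ⟨b, hb, h, hh, rfl⟩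
    exact mul_mem ((le_sup_left : B ≤ B ⊔ H) hb) ((le_sup_right : H ≤ B ⊔ H) hh)

lemma modular_law {B H A : Subgroup G} (hB : B.Normal) (hBA : B ≤ A) :
    (B ⊔ H) ⊓ A = B ⊔ (H ⊓ A) := by
  apply le_antisymm
  · intro x hx
    rw [Subgroup.mem_inf] at hx
    obtain ⟨hx1, hx2⟩ := hx
    obtain ⟨b, hb, h, hh, rfl⟩ := (mem_sup_of_normal hB).mp hx1
    have hhA : h ∈ A := by
      have h1 : b⁻¹ * (b * h) ∈ A := mul_mem (inv_mem (hBA hb)) hx2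
      simpa using h1
    exact (mem_sup_of_normal hB).mpr ⟨b, hb, h, Subgroup.mem_inf.mpr ⟨hh, hhA⟩, rfl⟩
  · exact sup_le (le_inf le_sup_left hBA)
      (le_inf (le_trans inf_le_left le_sup_right) inf_le_right)

/-- Abbreviation for the semidirect product condition in `UpCentralFactor`, for an
arbitrary ambient group. -/
def UCF (p : ℕ) (Q : Type*) [Group Q] (A : Subgroup Q) (hA : A.Normal) : Prop :=
  haveI := hA
  IsPSupersoluble p (↥A ⋊[QuotientGroup.kerLift (MulAut.conjNormal : Q →* MulAut ↥A)]
    (Q ⧸ (MulAut.conjNormal : Q →* MulAut ↥A).ker))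

lemma ucf_iff {p : ℕ} {K L : Subgroup G} (hK : K.Normal) (hL : L.Normal) :
    UpCentralFactor p K L hK hL ↔
      (haveI := hK
       UCF p (G ⧸ K) (L.map (QuotientGroup.mk' K))
         (hL.map _ (QuotientGroup.mk'_surjective K))) :=
  Iff.rfl

lemma ucf_congr {p : ℕ} {Q : Type*} [Group Q] {A B : Subgroup Q} (h : A = B)
    (hA : A.Normal) (hB : B.Normal) : UCF p Q A hA ↔ UCF p Q B hB := by
  subst h; rfl

lemma upCentralFactor_congr {p : ℕ} {K K' L L' : Subgroup G} (h1 : K = K') (h2 : L = L')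
    (hK : K.Normal) (hL : L.Normal) (hK' : K'.Normal) (hL' : L'.Normal) :
    UpCentralFactor p K L hK hL ↔ UpCentralFactor p K' L' hK' hL' := by
  subst h1; subst h2; rfl

lemma IsPSupersoluble.of_mulEquiv {p : ℕ} {X Y : Type*} [Group X] [Group Y] (e : X ≃* Y)
    (hX : IsPSupersoluble p X) : IsPSupersoluble p Y := by
  intro K L hKL
  have hsur : Function.Surjective (e : X →* Y) := e.surjective
  have hinj : Function.Injective (e : X →* Y) := e.injective
  have hrel : (K.comap (e : X →* Y)).relIndex (L.comap (e : X →* Y)) = K.relIndex L := by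
    rw [Subgroup.relIndex_comap, Subgroup.map_comap_eq_self_of_surjective hsur]
  have hchief : IsChiefFactor (K.comap (e : X →* Y)) (L.comap (e : X →* Y)) := by
    refine ⟨hKL.normK.comap _, hKL.normL.comap _, ?_, ?_⟩
    · refine lt_of_le_of_ne (Subgroup.comap_mono hKL.lt.le) ?_
      intro h
      exact hKL.lt.ne (Subgroup.comap_injective hsur h)
    · intro W hW hKW hWL
      have h1 := hKL.chief (W.map (e : X →* Y)) (hW.map _ hsur) ?_ ?_
      · rcases h1 with h1 | h1
        · left; rw [← Subgroup.comap_map_eq_self_of_injective hinj W, h1]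
        · right; rw [← Subgroup.comap_map_eq_self_of_injective hinj W, h1]
      · calc K = (K.comap (e : X →* Y)).map (e : X →* Y) :=
              (Subgroup.map_comap_eq_self_of_surjective hsur K).symm
          _ ≤ W.map (e : X →* Y) := Subgroup.map_mono hKW
      · calc W.map (e : X →* Y) ≤ (L.comap (e : X →* Y)).map (e : X →* Y) :=
              Subgroup.map_mono hWL
          _ = L := Subgroup.map_comap_eq_self_of_surjective hsur L
  rcases hX _ _ hchief with h | h
  · left; rwa [hrel] at h
  · right; rwa [hrel] at h


lemma ucf_map {p : ℕ} {Q Q' : Type*} [Group Q] [Group Q'] (f : Q →* Q')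
    (hf : Function.Surjective f) (A : Subgroup Q) (hA : A.Normal)
    (hdisj : A ⊓ f.ker = ⊥) :
    UCF p Q A hA ↔ UCF p Q' (A.map f) (hA.map f hf) := by
  haveI := hA
  haveI hA' : (A.map f).Normal := hA.map f hf
  set φ : Q →* MulAut ↥A := (MulAut.conjNormal : Q →* MulAut ↥A) with hφdef
  set φ' : Q' →* MulAut ↥(A.map f) := (MulAut.conjNormal : Q' →* MulAut ↥(A.map f)) with hφ'def
  -- injectivity of f on A
  have hfinj_on : ∀ x ∈ A, ∀ y ∈ A, f x = f y → x = y := by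
    intro x hx y hy hxy
    have h1 : x * y⁻¹ ∈ A ⊓ f.ker := by
      refine Subgroup.mem_inf.mpr ⟨mul_mem hx (inv_mem hy), ?_⟩
      rw [MonoidHom.mem_ker, map_mul, map_inv, hxy]
      simp
    rw [hdisj, Subgroup.mem_bot] at h1
    have := mul_eq_one_iff_eq_inv.mp h1
    simpa using this
  -- the equivalence on the normal subgroups
  have heninj : Function.Injective (f.subgroupMap A) := by
    intro a b hab
    have h1 : f ↑a = f ↑b := congrArg Subtype.val hab
    exact Subtype.ext (hfinj_on _ a.2 _ b.2 h1)
  let eN : ↥A ≃* ↥(A.map f) :=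
    MulEquiv.ofBijective (f.subgroupMap A) ⟨heninj, f.subgroupMap_surjective A⟩
  have heN : ∀ a : ↥A, ((eN a : ↥(A.map f)) : Q') = f ↑a := fun a => rfl
  -- kernels correspond
  have hker : ∀ q : Q, q ∈ φ.ker ↔ f q ∈ φ'.ker := by
    intro q
    constructor
    · intro hq
      rw [MonoidHom.mem_ker] at hq ⊢
      apply MulEquiv.ext
      intro b
      obtain ⟨a, rfl⟩ := (f.subgroupMap_surjective A) b
      have h1 : (φ q) a = a := by rw [hq]; rfl
      have h2 : q * ↑a * q⁻¹ = ↑a := by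
        have := congrArg Subtype.val h1
        simpa [hφdef] using this
      apply Subtype.ext
      show f q * (f.subgroupMap A a : Q') * (f q)⁻¹ = _
      have h3 : (f.subgroupMap A a : Q') = f ↑a := rfl
      rw [h3, ← map_inv, ← map_mul, ← map_mul, h2]
      rfl
    · intro hq
      rw [MonoidHom.mem_ker] at hq ⊢
      apply MulEquiv.ext
      intro a
      have h1 : (φ' (f q)) (eN a) = eN a := by rw [hq]; rfl
      have h2 : f q * f ↑a * (f q)⁻¹ = f ↑a := by
        have := congrArg Subtype.val h1
        simpa [hφ'def, heN] using this
      have h3 : f (q * ↑a * q⁻¹) = f ↑a := by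
        rw [map_mul, map_mul, map_inv, h2]
      have h4 : q * ↑a * q⁻¹ = ↑a :=
        hfinj_on _ (hA.conj_mem _ a.2 q) _ a.2 h3
      apply Subtype.ext
      simpa [hφdef] using h4
  -- the map between quotients
  let g : Q →* Q' ⧸ φ'.ker := (QuotientGroup.mk' φ'.ker).comp f
  have hgsurj : Function.Surjective g :=
    (QuotientGroup.mk'_surjective φ'.ker).comp hf
  have hgker : ∀ q : Q, g q = 1 ↔ q ∈ φ.ker := by
    intro q
    rw [hker q]
    show (QuotientGroup.mk (f q) : Q' ⧸ φ'.ker) = 1 ↔ _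
    rw [QuotientGroup.eq_one_iff]
  let eQhom : Q ⧸ φ.ker →* Q' ⧸ φ'.ker :=
    QuotientGroup.lift φ.ker g (fun x hx => (hgker x).mpr hx)
  have heQbij : Function.Bijective eQhom := by
    constructor
    · intro a b hab
      obtain ⟨x, rfl⟩ := QuotientGroup.mk'_surjective φ.ker a
      obtain ⟨y, rfl⟩ := QuotientGroup.mk'_surjective φ.ker b
      have h1 : g x = g y := hab
      have h2 : x⁻¹ * y ∈ φ.ker := by
        apply (hgker _).mp
        rw [map_mul, map_inv, ← h1]
        simp
      exact (QuotientGroup.eq ).mpr h2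
    · intro b
      obtain ⟨x, rfl⟩ := hgsurj b
      exact ⟨QuotientGroup.mk x, rfl⟩
  let eQ : (Q ⧸ φ.ker) ≃* (Q' ⧸ φ'.ker) := MulEquiv.ofBijective eQhom heQbij
  have heQ : ∀ q : Q, eQ (QuotientGroup.mk q) = QuotientGroup.mk (f q) := fun q => rfl
  -- compatibility of the actions
  have compat : ∀ (x : Q ⧸ φ.ker) (a : ↥A),
      eN (QuotientGroup.kerLift φ x a) = QuotientGroup.kerLift φ' (eQ x) (eN a) := by
    intro x a
    refine QuotientGroup.induction_on x ?_
    intro q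
    have h1 : QuotientGroup.kerLift φ (QuotientGroup.mk q) = φ q :=
      QuotientGroup.kerLift_mk _ _
    have h2 : QuotientGroup.kerLift φ' (eQ (QuotientGroup.mk q)) = φ' (f q) := by
      rw [heQ]; exact QuotientGroup.kerLift_mk _ _
    rw [h1, h2]
    apply Subtype.ext
    show ((eN ((φ q) a) : ↥(A.map f)) : Q') = _
    rw [heN]
    have h3 : (((φ q) a : ↥A) : Q) = q * ↑a * q⁻¹ := by simp [hφdef]
    rw [h3]
    have h4 : ((φ' (f q)) (eN a) : Q') = f q * ↑(eN a) * (f q)⁻¹ := by simp [hφ'def]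
    rw [h4, heN, map_mul, map_mul, map_inv]
  -- the equivalence of semidirect products
  let E : (↥A ⋊[QuotientGroup.kerLift φ] (Q ⧸ φ.ker)) ≃*
      (↥(A.map f) ⋊[QuotientGroup.kerLift φ'] (Q' ⧸ φ'.ker)) :=
    { toFun := fun x => ⟨eN x.left, eQ x.right⟩
      invFun := fun y => ⟨eN.symm y.left, eQ.symm y.right⟩
      left_inv := fun x => by simp
      right_inv := fun y => by simp
      map_mul' := by
        intro x y
        apply SemidirectProduct.ext
        · show eN (x * y).left = _
          rw [SemidirectProduct.mul_left, SemidirectProduct.mul_left]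
          rw [map_mul, compat]
        · show eQ (x * y).right = _
          rw [SemidirectProduct.mul_right, SemidirectProduct.mul_right, map_mul] }
  constructor
  · intro h
    exact IsPSupersoluble.of_mulEquiv E h
  · intro h
    exact IsPSupersoluble.of_mulEquiv E.symm h


lemma comap_map_mk' {K : Subgroup G} [K.Normal] (X : Subgroup G) :
    (X.map (QuotientGroup.mk' K)).comap (QuotientGroup.mk' K) = X ⊔ K := by
  rw [Subgroup.comap_map_eq, QuotientGroup.ker_mk']

lemma map_comap_mk' {K : Subgroup G} [K.Normal] (Y : Subgroup (G ⧸ K)) :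
    (Y.comap (QuotientGroup.mk' K)).map (QuotientGroup.mk' K) = Y :=
  Subgroup.map_comap_eq_self_of_surjective (QuotientGroup.mk'_surjective K) Y

lemma ker_le_comap_mk' {K : Subgroup G} [K.Normal] (Y : Subgroup (G ⧸ K)) :
    K ≤ Y.comap (QuotientGroup.mk' K) := by
  intro x hx
  have h1 : QuotientGroup.mk' K x = 1 := (QuotientGroup.eq_one_iff x).mpr hx
  show QuotientGroup.mk' K x ∈ Y
  rw [h1]; exact one_mem Y

lemma chief_comap {K : Subgroup G} [K.Normal] {Bb Ab : Subgroup (G ⧸ K)}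
    (h : IsChiefFactor Bb Ab) :
    IsChiefFactor (Bb.comap (QuotientGroup.mk' K)) (Ab.comap (QuotientGroup.mk' K)) := by
  have hsur := QuotientGroup.mk'_surjective K
  refine ⟨h.normK.comap _, h.normL.comap _, ?_, ?_⟩
  · refine lt_of_le_of_ne (Subgroup.comap_mono h.lt.le) fun heq => h.lt.ne ?_
    exact Subgroup.comap_injective hsur heq
  · intro W hW h1 h2
    have hKW : K ≤ W := le_trans (ker_le_comap_mk' Bb) h1
    have h3 := h.chief (W.map (QuotientGroup.mk' K)) (hW.map _ hsur) ?_ ?_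
    · have hWW : (W.map (QuotientGroup.mk' K)).comap (QuotientGroup.mk' K) = W := by
        rw [_root_.comap_map_mk', sup_eq_left.mpr hKW]
      rcases h3 with h3 | h3
      · left; rw [← hWW, h3]
      · right; rw [← hWW, h3]
    · rw [← map_comap_mk' Bb]; exact Subgroup.map_mono h1
    · rw [← map_comap_mk' Ab]; exact Subgroup.map_mono h2

lemma chief_map {K B A : Subgroup G} [K.Normal] (h : IsChiefFactor B A) (hKB : K ≤ B) :
    IsChiefFactor (B.map (QuotientGroup.mk' K)) (A.map (QuotientGroup.mk' K)) := by
  have hsur := QuotientGroup.mk'_surjective K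
  have hKA : K ≤ A := le_trans hKB h.lt.le
  have hcB : (B.map (QuotientGroup.mk' K)).comap (QuotientGroup.mk' K) = B := by
    rw [_root_.comap_map_mk', sup_eq_left.mpr hKB]
  have hcA : (A.map (QuotientGroup.mk' K)).comap (QuotientGroup.mk' K) = A := by
    rw [_root_.comap_map_mk', sup_eq_left.mpr hKA]
  refine ⟨h.normK.map _ hsur, h.normL.map _ hsur, ?_, ?_⟩
  · refine lt_of_le_of_ne (Subgroup.map_mono h.lt.le) fun heq => h.lt.ne ?_
    rw [← hcB, ← hcA, heq]
  · intro W hW h1 h2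
    have h3 := h.chief (W.comap (QuotientGroup.mk' K)) (hW.comap _) ?_ ?_
    · rcases h3 with h3 | h3
      · left; rw [← map_comap_mk' W, h3]
      · right; rw [← map_comap_mk' W, h3]
    · rw [← hcB]; exact Subgroup.comap_mono h1
    · rw [← hcA]; exact Subgroup.comap_mono h2

lemma ucf_quot {p : ℕ} {K B A : Subgroup G} [hK : K.Normal] (hKB : K ≤ B)
    (hB : B.Normal) (hA : A.Normal) :
    UpCentralFactor p B A hB hA ↔
      UpCentralFactor p (B.map (QuotientGroup.mk' K)) (A.map (QuotientGroup.mk' K))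
        (hB.map _ (QuotientGroup.mk'_surjective K))
        (hA.map _ (QuotientGroup.mk'_surjective K)) := by
  haveI := hB
  haveI hBb : (B.map (QuotientGroup.mk' K)).Normal := hB.map _ (QuotientGroup.mk'_surjective K)
  set e := QuotientGroup.quotientQuotientEquivQuotient K B hKB with he
  rw [ucf_iff, ucf_iff]
  have hfsur : Function.Surjective (e.toMonoidHom : ((G ⧸ K) ⧸ (B.map (QuotientGroup.mk' K))) →* G ⧸ B) :=
    e.surjective
  have hker : (e.toMonoidHom : ((G ⧸ K) ⧸ (B.map (QuotientGroup.mk' K))) →* G ⧸ B).ker = ⊥ :=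
    (MonoidHom.ker_eq_bot_iff _).mpr e.injective
  have step := ucf_map (p := p) e.toMonoidHom hfsur
      ((A.map (QuotientGroup.mk' K)).map (QuotientGroup.mk' (B.map (QuotientGroup.mk' K))))
      ((hA.map _ (QuotientGroup.mk'_surjective K)).map _
        (QuotientGroup.mk'_surjective (B.map (QuotientGroup.mk' K))))
      (by rw [hker, inf_bot_eq])
  have hmapeq : ((A.map (QuotientGroup.mk' K)).map
        (QuotientGroup.mk' (B.map (QuotientGroup.mk' K)))).map e.toMonoidHom
      = A.map (QuotientGroup.mk' B) := by
    rw [Subgroup.map_map, Subgroup.map_map]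
    have hcomp : (e.toMonoidHom.comp
        (QuotientGroup.mk' (B.map (QuotientGroup.mk' K)))).comp (QuotientGroup.mk' K)
        = QuotientGroup.mk' B := by
      ext x
      exact QuotientGroup.quotientQuotientEquivQuotientAux_mk_mk K B hKB x
    rw [hcomp]
  rw [ucf_congr hmapeq _ (hA.map _ (QuotientGroup.mk'_surjective B))] at step
  exact step.symm


lemma sect_chief {B A H : Subgroup G} (h : IsChiefFactor B A) (hH : H.Normal)
    (hBH : A ≤ B ⊔ H) : IsChiefFactor (B ⊓ H) (A ⊓ H) := by
  haveI := h.normK; haveI := h.normL; haveI := hH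
  have hAeq : B ⊔ (H ⊓ A) = A := by
    rw [← modular_law h.normK h.lt.le, inf_eq_right.mpr hBH]
  refine ⟨normal_inf' h.normK hH, normal_inf' h.normL hH, ?_, ?_⟩
  · refine lt_of_le_of_ne (inf_le_inf_right H h.lt.le) fun heq => h.lt.ne ?_
    rw [← hAeq, inf_comm H A, ← heq]
    exact (sup_eq_left.mpr inf_le_left).symm
  · intro W hW h1 h2
    haveI := hW
    have hWH : W ≤ H := le_trans h2 inf_le_right
    have h3 := h.chief (B ⊔ W) inferInstance le_sup_left
      (sup_le h.lt.le (le_trans h2 inf_le_left))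
    rcases h3 with h3 | h3
    · left
      refine le_antisymm ?_ h1
      exact le_inf (le_trans le_sup_right h3.le) hWH
    · right
      have h4 : (W ⊔ B) ⊓ H = W ⊔ (B ⊓ H) := modular_law hW hWH
      rw [sup_eq_left.mpr h1] at h4
      rw [← h3, sup_comm B W, h4]

lemma sect_ucf {p : ℕ} {B A H : Subgroup G} (h : IsChiefFactor B A) (hH : H.Normal)
    (hBH : A ≤ B ⊔ H) :
    UpCentralFactor p (B ⊓ H) (A ⊓ H) (normal_inf' h.normK hH) (normal_inf' h.normL hH) ↔
      UpCentralFactor p B A h.normK h.normL := by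
  haveI := h.normK; haveI := h.normL; haveI := hH
  haveI : (B ⊓ H).Normal := normal_inf' h.normK hH
  have hAeq : B ⊔ (H ⊓ A) = A := by
    rw [← modular_law h.normK h.lt.le, inf_eq_right.mpr hBH]
  rw [ucf_iff, ucf_iff]
  -- the natural surjection G ⧸ (B ⊓ H) →* G ⧸ B
  have hle : B ⊓ H ≤ B.comap (MonoidHom.id G) := by simpa using inf_le_left
  set f : (G ⧸ (B ⊓ H)) →* (G ⧸ B) :=
    QuotientGroup.map (B ⊓ H) B (MonoidHom.id G) hle with hfdef
  have hfmk : ∀ x : G, f (QuotientGroup.mk' (B ⊓ H) x) = QuotientGroup.mk' B x := by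
    intro x
    exact QuotientGroup.map_mk' (N := B ⊓ H) B (MonoidHom.id G) hle x
  have hfsur : Function.Surjective f := by
    intro y
    obtain ⟨x, rfl⟩ := QuotientGroup.mk'_surjective B y
    exact ⟨QuotientGroup.mk' (B ⊓ H) x, hfmk x⟩
  have hdisj : ((A ⊓ H).map (QuotientGroup.mk' (B ⊓ H))) ⊓ f.ker = ⊥ := by
    rw [eq_bot_iff]
    intro y hy
    rw [Subgroup.mem_inf] at hy
    obtain ⟨⟨a, ha, rfl⟩, hy2⟩ := hy.imp (fun h => Subgroup.mem_map.mp h) id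
    rw [Subgroup.mem_bot]
    rw [MonoidHom.mem_ker, hfmk] at hy2
    have ha2 : a ∈ B := (QuotientGroup.eq_one_iff a).mp hy2
    have : a ∈ B ⊓ H := Subgroup.mem_inf.mpr ⟨ha2, (Subgroup.mem_inf.mp ha).2⟩
    exact (QuotientGroup.eq_one_iff a).mpr this
  have step := ucf_map (p := p) f hfsur ((A ⊓ H).map (QuotientGroup.mk' (B ⊓ H)))
    ((normal_inf' h.normL hH).map _ (QuotientGroup.mk'_surjective (B ⊓ H))) hdisj
  have hmapeq : (((A ⊓ H).map (QuotientGroup.mk' (B ⊓ H))).map f) =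
      A.map (QuotientGroup.mk' B) := by
    rw [Subgroup.map_map]
    have hcomp : f.comp (QuotientGroup.mk' (B ⊓ H)) = QuotientGroup.mk' B := by
      ext x; exact hfmk x
    rw [hcomp]
    apply le_antisymm (Subgroup.map_mono inf_le_left)
    rintro y ⟨a, haA, rfl⟩
    have haBH : a ∈ B ⊔ (H ⊓ A) := hAeq.symm ▸ haA
    obtain ⟨b, hb, c, hc, rfl⟩ := (mem_sup_of_normal h.normK).mp haBH
    have hb1 : QuotientGroup.mk' B b = 1 := (QuotientGroup.eq_one_iff b).mpr hb
    have hmk : QuotientGroup.mk' B (b * c) = QuotientGroup.mk' B c := by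
      rw [map_mul, hb1, one_mul]
    rw [hmk]
    rw [Subgroup.mem_inf] at hc
    exact ⟨c, Subgroup.mem_inf.mpr ⟨hc.2, hc.1⟩, rfl⟩
  rw [ucf_congr hmapeq _ (h.normL.map _ (QuotientGroup.mk'_surjective B))] at step
  exact step


/-- All chief factors of `G` below `H` are `U_p`-central. -/
def CentBelow (p : ℕ) {G : Type*} [Group G] (H : Subgroup G) : Prop :=
  ∀ K L : Subgroup G, ∀ h : IsChiefFactor K L, L ≤ H →
    UpCentralFactor p K L h.normK h.normL

/-- All chief factors of `G` between `K` and `H` are `U_p`-central. -/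
def CBet (p : ℕ) {G : Type*} [Group G] (K H : Subgroup G) : Prop :=
  ∀ B A : Subgroup G, ∀ h : IsChiefFactor B A, K ≤ B → A ≤ H →
    UpCentralFactor p B A h.normK h.normL

lemma cbet_mono_floor {p : ℕ} {K K' H : Subgroup G} (h : CBet p K H) (hle : K ≤ K') :
    CBet p K' H := fun B A hch hK'B hAH => h B A hch (le_trans hle hK'B) hAH

lemma centBelow_bot (p : ℕ) : CentBelow p (⊥ : Subgroup G) := by
  intro K L h hle
  exact absurd (lt_of_lt_of_le h.lt hle) (by simp)

lemma lift_chief {B A X : Subgroup G} (h : IsChiefFactor B A) (hX : X.Normal)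
    (hAX : A ⊓ X ≤ B) : IsChiefFactor (B ⊔ X) (B ⊔ X ⊔ A) ∧ (B ⊔ X) ⊓ A = B := by
  haveI := h.normK; haveI := h.normL; haveI := hX
  have hCA : (B ⊔ X) ⊓ A = B := by
    rw [modular_law h.normK h.lt.le, inf_comm X A]
    exact sup_eq_left.mpr hAX
  have hnotle : ¬ A ≤ B ⊔ X := fun hle => h.lt.ne (by rw [← hCA]; exact inf_eq_right.mpr hle)
  refine ⟨⟨inferInstance, inferInstance, ?_, ?_⟩, hCA⟩
  · exact lt_of_le_of_ne le_sup_left fun heq => hnotle (le_trans le_sup_right heq.symm.le)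
  · intro W hW h1 h2
    haveI := hW
    haveI hBXn : (B ⊔ X).Normal := Subgroup.sup_normal B X
    have hW2 : (B ⊔ X ⊔ A) ⊓ W = (B ⊔ X) ⊔ (A ⊓ W) := modular_law hBXn h1
    rw [inf_eq_right.mpr h2] at hW2
    have h3 := h.chief (A ⊓ W) (normal_inf' h.normL hW)
      (le_inf h.lt.le (le_trans le_sup_left h1)) inf_le_left
    rcases h3 with h3 | h3
    · left; rw [hW2, h3]; exact sup_eq_left.mpr le_sup_left
    · right; rw [hW2, h3]
  -- note: in the first case B ≤ B ⊔ X needed; in second W = B ⊔ X ⊔ A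

lemma centBelow_sup {p : ℕ} {X Y : Subgroup G} (hX : X.Normal) (hY : Y.Normal)
    (hcX : CentBelow p X) (hcY : CentBelow p Y) : CentBelow p (X ⊔ Y) := by
  intro B A h hle
  haveI := h.normK; haveI := h.normL; haveI := hX; haveI := hY
  have hdich := h.chief (B ⊔ (A ⊓ X)) inferInstance le_sup_left
    (sup_le h.lt.le inf_le_left)
  rcases hdich with hd | hd
  · -- A ⊓ X ≤ B
    have hAX : A ⊓ X ≤ B := le_trans le_sup_right hd.le
    obtain ⟨hch1, hCA⟩ := lift_chief h hX hAX
    have hle2 : (B ⊔ X) ⊔ A ≤ (B ⊔ X) ⊔ Y :=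
      sup_le le_sup_left
        (le_trans hle (sup_le (le_trans le_sup_right le_sup_left) le_sup_right))
    have h4 := sect_chief hch1 hY hle2
    have h5 := hcY _ _ h4 inf_le_right
    have h6 := (sect_ucf hch1 hY hle2).mp h5
    have h7 := (sect_ucf hch1 h.normL (le_refl ((B ⊔ X) ⊔ A))).mpr h6
    have h8 : ((B ⊔ X) ⊔ A) ⊓ A = A := inf_eq_right.mpr le_sup_right
    exact (upCentralFactor_congr hCA h8 (normal_inf' hch1.normK h.normL)
      (normal_inf' hch1.normL h.normL) h.normK h.normL).mp h7
  · -- A ≤ B ⊔ X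
    have hle2 : A ≤ B ⊔ X := by
      rw [← hd]; exact sup_le le_sup_left (le_trans inf_le_right le_sup_right)
    have hs := sect_chief h hX hle2
    have hUC := hcX _ _ hs inf_le_right
    exact (sect_ucf h hX hle2).mp hUC

lemma centBelow_sSup {p : ℕ} [Finite G] (S : Set (Subgroup G))
    (hS : ∀ H ∈ S, H.Normal ∧ CentBelow p H) :
    (sSup S).Normal ∧ CentBelow p (sSup S) := by
  classical
  have hfin : S.Finite := Set.toFinite S
  have key : ∀ s : Finset (Subgroup G), (∀ H ∈ s, H.Normal ∧ CentBelow p H) →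
      ((s.sup id).Normal ∧ CentBelow p (s.sup id)) := by
    intro s
    induction s using Finset.induction_on with
    | empty =>
      intro _
      simpa using (⟨(inferInstance : (⊥ : Subgroup G).Normal), centBelow_bot p⟩ :
        (⊥ : Subgroup G).Normal ∧ CentBelow p (⊥ : Subgroup G))
    | @insert a s' ha ih =>
      intro hmem
      have h1 := hmem a (Finset.mem_insert_self a s')
      have h2 := ih (fun H hH => hmem H (Finset.mem_insert_of_mem hH))
      rw [Finset.sup_insert]
      simp only [id_eq]
      haveI := h1.1; haveI := h2.1
      exact ⟨Subgroup.sup_normal _ _, centBelow_sup h1.1 h2.1 h1.2 h2.2⟩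
  have h1 : sSup S = hfin.toFinset.sup id := by
    rw [Finset.sup_id_eq_sSup, Set.Finite.coe_toFinset]
  rw [h1]
  exact key hfin.toFinset (fun H hH => hS H (hfin.mem_toFinset.mp hH))

lemma upHypercenter_eq (p : ℕ) (G : Type*) [Group G] :
    UpHypercenter p G = sSup {N : Subgroup G | N.Normal ∧ CentBelow p N} := rfl

lemma le_upHypercenter {p : ℕ} {H : Subgroup G} (h1 : H.Normal) (h2 : CentBelow p H) :
    H ≤ UpHypercenter p G := le_sSup ⟨h1, h2⟩

lemma centBelow_upHypercenter (p : ℕ) (G : Type*) [Group G] [Finite G] :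
    CentBelow p (UpHypercenter p G) := by
  rw [upHypercenter_eq]
  exact (centBelow_sSup _ (fun H hH => hH)).2

lemma cbet_of_map_le {p : ℕ} [Finite G] {K H : Subgroup G} [hK : K.Normal]
    (h : H.map (QuotientGroup.mk' K) ≤ UpHypercenter p (G ⧸ K)) : CBet p K H := by
  intro B A hch hKB hAH
  have hchq := chief_map hch hKB
  have hc := centBelow_upHypercenter p (G ⧸ K)
  have hUC := hc _ _ hchq (le_trans (Subgroup.map_mono hAH) h)
  exact (ucf_quot (K := K) hKB hch.normK hch.normL).mpr hUC

lemma centBelow_map {p : ℕ} {K H : Subgroup G} [hK : K.Normal] (hKH : K ≤ H)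
    (h : CBet p K H) : CentBelow p (H.map (QuotientGroup.mk' K)) := by
  intro Bb Ab hch hle
  have hchG := chief_comap hch
  have hKB : K ≤ Bb.comap (QuotientGroup.mk' K) := ker_le_comap_mk' Bb
  have hA : Ab.comap (QuotientGroup.mk' K) ≤ H := by
    have h2 := Subgroup.comap_mono (f := QuotientGroup.mk' K) hle
    rwa [_root_.comap_map_mk' H, sup_eq_left.mpr hKH] at h2
  have hUC := h _ _ hchG hKB hA
  have hUC3 := (ucf_quot (K := K) hKB hchG.normK hchG.normL).mp hUC
  exact (upCentralFactor_congr (map_comap_mk' Bb) (map_comap_mk' Ab)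
    (hchG.normK.map _ (QuotientGroup.mk'_surjective K))
    (hchG.normL.map _ (QuotientGroup.mk'_surjective K)) hch.normK hch.normL).mp hUC3

end AuxProof





/-- If `N ⊴ G` and `M ⊴ G` is minimal among normal subgroups `K` of `G` with
`K/(K ∩ N) ≰ Z_{U_p}(G/(K ∩ N))`, then `M` has a unique maximal `G`-invariant subgroup `L`;
moreover `L ≥ M ∩ N`, `L/(M ∩ N) ≤ Z_{U_p}(G/(M ∩ N))` and `M/L ≰ Z_{U_p}(G/L)`. -/
theorem thm_unique_maximal_invariant
    {G : Type*} [Group G] [Finite G] {p : ℕ} (hp : p.Prime)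
    (N : Subgroup G) (hN : N.Normal)
    (M : Subgroup G) (hM : M.Normal)
    (hMbad : haveI := normal_inf' hM hN;
      ¬ M.map (QuotientGroup.mk' (M ⊓ N)) ≤ UpHypercenter p (G ⧸ (M ⊓ N)))
    (hmin : ∀ K : Subgroup G, ∀ hK : K.Normal, K ≤ M →
      (haveI := normal_inf' hK hN;
        ¬ K.map (QuotientGroup.mk' (K ⊓ N)) ≤ UpHypercenter p (G ⧸ (K ⊓ N))) → K = M) :
    ∃ (L : Subgroup G) (hL : L.Normal), L < M ∧
      (∀ X : Subgroup G, X.Normal → X ≤ M → X ≠ M → X ≤ L) ∧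
      M ⊓ N ≤ L ∧
      (haveI := normal_inf' hM hN;
        L.map (QuotientGroup.mk' (M ⊓ N)) ≤ UpHypercenter p (G ⧸ (M ⊓ N))) ∧
      (haveI := hL;
        ¬ M.map (QuotientGroup.mk' L) ≤ UpHypercenter p (G ⧸ L)) := by
  classical
  haveI := hM; haveI := hN
  haveI hMNn : (M ⊓ N).Normal := normal_inf' hM hN
  set S : Set (Subgroup G) := {X : Subgroup G | X.Normal ∧ X ≤ M ∧ X ≠ M} with hSdef
  set L : Subgroup G := sSup S with hLdef
  have hLnorm : L.Normal := sSup_normal (fun H hH => hH.1)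
  have hLM : L ≤ M := sSup_le (fun H hH => hH.2.1)
  -- M is not below N
  have hMnleN : ¬ M ≤ N := by
    intro hle
    apply hMbad
    have hbot : M.map (QuotientGroup.mk' (M ⊓ N)) = ⊥ := by
      rw [eq_bot_iff]
      rintro y ⟨m, hm, rfl⟩
      rw [Subgroup.mem_bot]
      exact (QuotientGroup.eq_one_iff m).mpr (Subgroup.mem_inf.mpr ⟨hm, hle hm⟩)
    rw [hbot]; exact bot_le
  have hFneM : M ⊓ N ≠ M := fun heq => hMnleN (inf_eq_left.mp heq)
  have hFS : M ⊓ N ∈ S := ⟨hMNn, inf_le_left, hFneM⟩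
  have hFL : M ⊓ N ≤ L := le_sSup hFS
  -- each member of S satisfies CBet
  have hDgood : ∀ D ∈ S, CBet p (D ⊓ N) D := by
    intro D hD
    obtain ⟨hDnorm, hDM, hDne⟩ := hD
    haveI := hDnorm
    haveI hDNn : (D ⊓ N).Normal := normal_inf' hDnorm hN
    have hmap : D.map (QuotientGroup.mk' (D ⊓ N)) ≤ UpHypercenter p (G ⧸ (D ⊓ N)) := by
      by_contra hcon
      exact hDne (hmin D hDnorm hDM hcon)
    exact cbet_of_map_le hmap
  -- images of members of S in G ⧸ (M ⊓ N) satisfy CentBelow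
  have himg : ∀ D ∈ S, CentBelow p (D.map (QuotientGroup.mk' (M ⊓ N))) := by
    intro D hD Bb Ab hch hle
    have hchG := chief_comap hch
    have hKB : M ⊓ N ≤ Bb.comap (QuotientGroup.mk' (M ⊓ N)) := ker_le_comap_mk' Bb
    have hA : Ab.comap (QuotientGroup.mk' (M ⊓ N)) ≤ D ⊔ (M ⊓ N) := by
      have h2 := Subgroup.comap_mono (f := QuotientGroup.mk' (M ⊓ N)) hle
      rwa [comap_map_mk' D] at h2
    have hle2 : Ab.comap (QuotientGroup.mk' (M ⊓ N)) ≤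
        (Bb.comap (QuotientGroup.mk' (M ⊓ N))) ⊔ D :=
      le_trans hA (sup_le le_sup_right (le_trans hKB le_sup_left))
    have hsect := sect_chief hchG hD.1 hle2
    have hUC := hDgood D hD _ _ hsect
      (le_inf (le_trans (inf_le_inf_right N hD.2.1) hKB) inf_le_left) inf_le_right
    have hUC2 := (sect_ucf hchG hD.1 hle2).mp hUC
    have hUC3 := (ucf_quot (K := M ⊓ N) hKB hchG.normK hchG.normL).mp hUC2
    exact (upCentralFactor_congr (map_comap_mk' Bb) (map_comap_mk' Ab)
      (hchG.normK.map _ (QuotientGroup.mk'_surjective (M ⊓ N)))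
      (hchG.normL.map _ (QuotientGroup.mk'_surjective (M ⊓ N)))
      hch.normK hch.normL).mp hUC3
  -- L is a proper subgroup of M
  have hLneM : L ≠ M := by
    intro heq
    apply hMbad
    have hmapgen : (sSup S).map (QuotientGroup.mk' (M ⊓ N)) =
        sSup ((fun D => D.map (QuotientGroup.mk' (M ⊓ N))) '' S) := by
      rw [sSup_image]
      exact (Subgroup.gc_map_comap (QuotientGroup.mk' (M ⊓ N))).l_sSup
    have h2 := centBelow_sSup (p := p) ((fun D => D.map (QuotientGroup.mk' (M ⊓ N))) '' S)
      (by
        rintro _ ⟨D, hD, rfl⟩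
        exact ⟨hD.1.map _ (QuotientGroup.mk'_surjective (M ⊓ N)), himg D hD⟩)
    have h3 : sSup ((fun D => D.map (QuotientGroup.mk' (M ⊓ N))) '' S) =
        M.map (QuotientGroup.mk' (M ⊓ N)) :=
      hmapgen.symm.trans (congrArg (fun T : Subgroup G => T.map (QuotientGroup.mk' (M ⊓ N))) heq)
    rw [h3] at h2
    exact le_upHypercenter h2.1 h2.2
  have hLltM : L < M := lt_of_le_of_ne hLM hLneM
  -- CBet p (M ⊓ N) L from the minimality of M
  haveI hLNn : (L ⊓ N).Normal := normal_inf' hLnorm hN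
  have hLmap : L.map (QuotientGroup.mk' (L ⊓ N)) ≤ UpHypercenter p (G ⧸ (L ⊓ N)) := by
    by_contra hcon
    exact hLneM (hmin L hLnorm hLM hcon)
  have hCBetLNL : CBet p (L ⊓ N) L := cbet_of_map_le hLmap
  have hCBetFL : CBet p (M ⊓ N) L := by
    intro B A hch hFB hAL
    exact hCBetLNL B A hch (le_trans (inf_le_inf_right N hLM) hFB) hAL
  have hLcb : CentBelow p (L.map (QuotientGroup.mk' (M ⊓ N))) :=
    centBelow_map hFL hCBetFL
  have hLle : L.map (QuotientGroup.mk' (M ⊓ N)) ≤ UpHypercenter p (G ⧸ (M ⊓ N)) :=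
    le_upHypercenter (hLnorm.map _ (QuotientGroup.mk'_surjective (M ⊓ N))) hLcb
  -- the last statement
  have hfinal : ¬ M.map (QuotientGroup.mk' L) ≤ UpHypercenter p (G ⧸ L) := by
    intro hcon
    apply hMbad
    haveI := hLnorm
    have hCBetLM : CBet p L M := cbet_of_map_le hcon
    have hCBetFM : CBet p (M ⊓ N) M := by
      intro B A hch hFB hAM
      haveI := hch.normK; haveI := hch.normL
      haveI hALn : (A ⊓ L).Normal := normal_inf' hch.normL hLnorm
      have hd := hch.chief (B ⊔ (A ⊓ L)) (Subgroup.sup_normal B (A ⊓ L)) le_sup_left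
        (sup_le hch.lt.le inf_le_left)
      rcases hd with hd | hd
      · -- A ⊓ L ≤ B
        have hAX : A ⊓ L ≤ B := le_trans le_sup_right hd.le
        obtain ⟨hch1, hCA⟩ := lift_chief hch hLnorm hAX
        have hUC1 := hCBetLM _ _ hch1 le_sup_right
          (sup_le (sup_le (le_trans hch.lt.le hAM) hLM) hAM)
        have h7 := (sect_ucf hch1 hch.normL (le_refl ((B ⊔ L) ⊔ A))).mpr hUC1
        have h8 : ((B ⊔ L) ⊔ A) ⊓ A = A := inf_eq_right.mpr le_sup_right
        exact (upCentralFactor_congr hCA h8 (normal_inf' hch1.normK hch.normL)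
          (normal_inf' hch1.normL hch.normL) hch.normK hch.normL).mp h7
      · -- A ≤ B ⊔ L
        have hle2 : A ≤ B ⊔ L := by
          rw [← hd]; exact sup_le le_sup_left (le_trans inf_le_right le_sup_right)
        have hs := sect_chief hch hLnorm hle2
        have hUC := hCBetFL _ _ hs (le_inf hFB hFL) inf_le_right
        exact (sect_ucf hch hLnorm hle2).mp hUC
    have hMcb : CentBelow p (M.map (QuotientGroup.mk' (M ⊓ N))) :=
      centBelow_map inf_le_left hCBetFM
    exact le_upHypercenter (hM.map _ (QuotientGroup.mk'_surjective (M ⊓ N))) hMcb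
  exact ⟨L, hLnorm, hLltM, fun X hX1 hX2 hX3 => le_sSup ⟨hX1, hX2, hX3⟩, hFL, hLle, hfinal⟩
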